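/- arXiv:1510.03500 — 3 statements merged into one kernel-verified Lean document; each statement's English description precedes it below -/
import Mathlib

section
/- For 0 < p < 1 and natural numbers n ≥ 1 and 1 ≤ d ≤ n, we have 0 ≤ p*(1-p)^(d-1)*(1 - (1-p)^(n-d+1)) / (1 - (1-p)^(n+1) - (n+1)*p*(1-p)^n), and the sum of this expression over d from 1 to n equals 1. -/
open scoped BigOperators

lemma aux_key (p : ℝ) (hp : 0 < p) (hp1 : p < 1) (n : ℕ) (hn : 1 ≤ n) :
    (1 + (n : ℝ) * p) * (1 - p) ^ n < 1 := by
  induction n with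
  | zero => omega
  | succ m ih =>
    rcases Nat.eq_zero_or_pos m with h | h
    · subst h; norm_num; nlinarith
    · have hm : 1 ≤ m := h
      have ihm := ih hm
      have hq : (0:ℝ) < (1 - p) ^ m := pow_pos (by linarith) m
      have hmn : (0:ℝ) ≤ (m:ℝ) := Nat.cast_nonneg m
      have : (1 + ((m:ℝ)+1) * p) * (1 - p) ≤ 1 + (m:ℝ) * p := by nlinarith [sq_nonneg p, mul_nonneg hmn (sq_nonneg p)]
      push_cast
      calc (1 + ((m:ℝ)+1) * p) * (1 - p) ^ (m+1)
          = ((1 + ((m:ℝ)+1) * p) * (1 - p)) * (1 - p) ^ m := by ring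
        _ ≤ (1 + (m:ℝ) * p) * (1 - p) ^ m := by nlinarith
        _ < 1 := ihm

lemma aux_den (p : ℝ) (hp : 0 < p) (hp1 : p < 1) (n : ℕ) (hn : 1 ≤ n) :
    0 < 1 - (1 - p) ^ (n + 1) - ((n : ℝ) + 1) * p * (1 - p) ^ n := by
  have h := aux_key p hp hp1 n hn
  have : (1:ℝ) - (1 - p) ^ (n + 1) - ((n : ℝ) + 1) * p * (1 - p) ^ n
      = 1 - (1 + (n:ℝ) * p) * (1 - p) ^ n := by ring
  rw [this]; linarith

theorem stmt_4 (p : ℝ) (hp : 0 < p) (hp1 : p < 1) (n : ℕ) (hn : 1 ≤ n) :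
    (∀ d ∈ Finset.Icc 1 n,
      0 ≤ p * (1 - p) ^ (d - 1) * (1 - (1 - p) ^ (n - d + 1)) /
        (1 - (1 - p) ^ (n + 1) - ((n : ℝ) + 1) * p * (1 - p) ^ n)) ∧
    ∑ d ∈ Finset.Icc 1 n,
      p * (1 - p) ^ (d - 1) * (1 - (1 - p) ^ (n - d + 1)) /
        (1 - (1 - p) ^ (n + 1) - ((n : ℝ) + 1) * p * (1 - p) ^ n) = 1 := by
  have hq0 : (0:ℝ) < 1 - p := by linarith
  have hq1 : (1:ℝ) - p < 1 := by linarith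
  have hD := aux_den p hp hp1 n hn
  constructor
  · intro d hd
    have h1 : (1 - p) ^ (n - d + 1) < 1 :=
      pow_lt_one₀ (by linarith) hq1 (by omega)
    have h2 : (0:ℝ) < (1 - p) ^ (d - 1) := by positivity
    exact div_nonneg (mul_nonneg (mul_nonneg hp.le h2.le) (by linarith)) hD.le
  · rw [← Finset.sum_div]
    rw [div_eq_one_iff_eq hD.ne']
    have hreindex : ∑ d ∈ Finset.Icc 1 n,
        p * (1 - p) ^ (d - 1) * (1 - (1 - p) ^ (n - d + 1))
        = ∑ i ∈ Finset.range n, (p * (1 - p) ^ i - p * (1 - p) ^ n) := by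
      rw [← Finset.Ico_add_one_right_eq_Icc, Finset.sum_Ico_eq_sum_range]
      have hrange : n + 1 - 1 = n := by omega
      rw [hrange]
      apply Finset.sum_congr rfl
      intro i hi
      have hi' : i < n := Finset.mem_range.mp hi
      have e1 : 1 + i - 1 = i := by omega
      have e2 : n - (1 + i) + 1 = n - i := by omega
      rw [e1, e2]
      have e3 : (1 - p) ^ i * (1 - p) ^ (n - i) = (1 - p) ^ n := by
        rw [← pow_add]; congr 1; omega
      nlinarith [e3]
    rw [hreindex, Finset.sum_sub_distrib, ← Finset.mul_sum,
      Finset.sum_const, Finset.card_range, geom_sum_eq (by linarith : (1:ℝ) - p ≠ 1)]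
    have hkey : p * ((1 - p) ^ n - 1) / ((1 - p) - 1) = 1 - (1 - p) ^ n := by
      rw [show (1:ℝ) - p - 1 = -p by ring, div_eq_iff (neg_ne_zero.mpr hp.ne')]
      ring
    rw [nsmul_eq_mul, mul_div_assoc'] at *
    rw [hkey]
    ring
end

section
/- For 0 < p < 1, natural numbers n, i with 1 ≤ i, and 1 ≤ d ≤ n, the sum over d from 1 to n of p^(i+1)*(1-p)^(d-1) * (sum over j from i-1 to n-d of (j choose (i-1))*(1-p)^(j-i+1)) equals 1 - (sum over k from 0 to i of ((n+1) choose k) * p^k * (1-p)^(n+1-k)). -/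
open scoped BigOperators

open Finset

/-- The left-hand side, with `k = i - 1`. -/
noncomputable def stmt5L (p : ℝ) (k n : ℕ) : ℝ :=
  ∑ d ∈ Finset.Icc 1 n, p ^ (k + 2) * (1 - p) ^ (d - 1) *
    ∑ j ∈ Finset.Icc k (n - d), (j.choose k : ℝ) * (1 - p) ^ (j - k)

/-- The right-hand side tail sum. -/
noncomputable def stmt5R (p : ℝ) (k n : ℕ) : ℝ :=
  ∑ j ∈ Finset.Icc (k + 2) (n + 1), ((n + 1).choose j : ℝ) * p ^ j * (1 - p) ^ (n + 1 - j)

lemma stmt5L_succ (p : ℝ) (k n : ℕ) :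
    stmt5L p k (n + 1)
      = stmt5L p k n + p ^ (k + 2) * (1 - p) ^ (n - k) * ((n + 1).choose (k + 1) : ℝ) := by
  unfold stmt5L
  rw [Finset.sum_Icc_succ_top (by omega : 1 ≤ n + 1)]
  have h1 : ∀ d ∈ Finset.Icc 1 n,
      p ^ (k + 2) * (1 - p) ^ (d - 1) *
          ∑ j ∈ Finset.Icc k (n + 1 - d), (j.choose k : ℝ) * (1 - p) ^ (j - k)
        = p ^ (k + 2) * (1 - p) ^ (d - 1) *
            ∑ j ∈ Finset.Icc k (n - d), (j.choose k : ℝ) * (1 - p) ^ (j - k)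
          + p ^ (k + 2) * (1 - p) ^ (n - k) *
              (if k ≤ n + 1 - d then (((n + 1 - d).choose k : ℕ) : ℝ) else 0) := by
    intro d hd
    rw [Finset.mem_Icc] at hd
    have hnd : n + 1 - d = (n - d) + 1 := by omega
    rw [hnd]
    by_cases hk : k ≤ n - d + 1
    · rw [Finset.sum_Icc_succ_top hk, if_pos hk, mul_add]
      congr 1
      have hpow : (1 - p) ^ (d - 1) * (1 - p) ^ (n - d + 1 - k) = (1 - p) ^ (n - k) := by
        rw [← pow_add]
        congr 1
        omega
      calc p ^ (k + 2) * (1 - p) ^ (d - 1) *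
              (((n - d + 1).choose k : ℝ) * (1 - p) ^ (n - d + 1 - k))
          = p ^ (k + 2) * ((1 - p) ^ (d - 1) * (1 - p) ^ (n - d + 1 - k)) *
              ((n - d + 1).choose k : ℝ) := by ring
        _ = _ := by rw [hpow]
    · rw [if_neg hk, Finset.Icc_eq_empty (by omega), Finset.Icc_eq_empty (by omega)]
      simp
  rw [Finset.sum_congr rfl h1, Finset.sum_add_distrib]
  have h2 : ∑ d ∈ Finset.Icc 1 n,
        p ^ (k + 2) * (1 - p) ^ (n - k) *
          (if k ≤ n + 1 - d then (((n + 1 - d).choose k : ℕ) : ℝ) else 0)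
      = ∑ m ∈ Finset.Icc 1 n,
        p ^ (k + 2) * (1 - p) ^ (n - k) *
          (if k ≤ m then ((m.choose k : ℕ) : ℝ) else 0) := by
    refine Finset.sum_nbij' (fun d => n + 1 - d) (fun m => n + 1 - m) ?_ ?_ ?_ ?_ ?_
    · intro a ha; simp only [Finset.mem_Icc] at ha ⊢; omega
    · intro a ha; simp only [Finset.mem_Icc] at ha ⊢; omega
    · intro a ha; simp only [Finset.mem_Icc] at ha ⊢; omega
    · intro a ha; simp only [Finset.mem_Icc] at ha ⊢; omega
    · intro a ha; rfl
  rw [h2]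
  have h3 : p ^ (k + 2) * (1 - p) ^ (n + 1 - 1) *
        ∑ j ∈ Finset.Icc k (n + 1 - (n + 1)), (j.choose k : ℝ) * (1 - p) ^ (j - k)
      = p ^ (k + 2) * (1 - p) ^ (n - k) *
          (if k ≤ (0 : ℕ) then (((0 : ℕ).choose k : ℕ) : ℝ) else 0) := by
    simp only [Nat.sub_self, Nat.add_sub_cancel]
    by_cases hk : k = 0
    · subst hk; simp
    · rw [Finset.Icc_eq_empty (by omega), if_neg (by omega)]
      simp
  rw [h3]
  have h4 : (∑ m ∈ Finset.Icc 1 n,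
        p ^ (k + 2) * (1 - p) ^ (n - k) * (if k ≤ m then ((m.choose k : ℕ) : ℝ) else 0))
      + p ^ (k + 2) * (1 - p) ^ (n - k) *
          (if k ≤ (0 : ℕ) then (((0 : ℕ).choose k : ℕ) : ℝ) else 0)
      = ∑ m ∈ Finset.Icc 0 n,
        p ^ (k + 2) * (1 - p) ^ (n - k) * (if k ≤ m then ((m.choose k : ℕ) : ℝ) else 0) := by
    have : Finset.Icc 0 n = insert 0 (Finset.Icc 1 n) := by
      ext x; simp [Finset.mem_Icc]; omega
    rw [this, Finset.sum_insert (by simp)]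
    ring
  rw [add_assoc, h4, ← Finset.mul_sum]
  congr 1
  have h5 : ∑ m ∈ Finset.Icc 0 n, (if k ≤ m then ((m.choose k : ℕ) : ℝ) else 0)
      = ∑ m ∈ Finset.Icc k n, ((m.choose k : ℕ) : ℝ) := by
    rw [← Finset.sum_filter]
    congr 1
    ext x
    simp only [Finset.mem_filter, Finset.mem_Icc]
    omega
  rw [h5]
  push_cast [← Nat.sum_Icc_choose]
  rfl

lemma stmt5R_succ (p : ℝ) (k n : ℕ) :
    stmt5R p k (n + 1)
      = stmt5R p k n + p ^ (k + 2) * (1 - p) ^ (n - k) * ((n + 1).choose (k + 1) : ℝ) := by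
  by_cases hkn : k ≤ n
  swap
  · unfold stmt5R
    rw [Finset.Icc_eq_empty (by omega), Finset.Icc_eq_empty (by omega),
      Nat.choose_eq_zero_of_lt (by omega)]
    simp
  unfold stmt5R
  have hmap : Finset.Icc (k + 2) (n + 1 + 1)
      = (Finset.Icc (k + 1) (n + 1)).map (addRightEmbedding 1) := by
    rw [Finset.map_add_right_Icc]
  rw [hmap, Finset.sum_map]
  simp only [addRightEmbedding_apply]
  have hterm : ∀ j ∈ Finset.Icc (k + 1) (n + 1),
      ((n + 1 + 1).choose (j + 1) : ℝ) * p ^ (j + 1) * (1 - p) ^ (n + 1 + 1 - (j + 1))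
        = ((n + 1).choose j : ℝ) * p ^ (j + 1) * (1 - p) ^ (n + 1 - j)
          + ((n + 1).choose (j + 1) : ℝ) * p ^ (j + 1) * (1 - p) ^ (n + 1 - j) := by
    intro j hj
    rw [show n + 1 + 1 - (j + 1) = n + 1 - j from by omega, Nat.choose_succ_succ]
    simp only [Nat.succ_eq_add_one]
    push_cast
    ring
  rw [Finset.sum_congr rfl hterm, Finset.sum_add_distrib]
  -- first sum: split off bottom element k+1
  have hsplit : Finset.Icc (k + 1) (n + 1)
      = (Finset.Ioc (k + 1) (n + 1)).cons (k + 1) Finset.left_notMem_Ioc :=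
    Finset.Icc_eq_cons_Ioc (by omega)
  have hIoc : Finset.Ioc (k + 1) (n + 1) = Finset.Icc (k + 2) (n + 1) :=
    (Finset.Icc_add_one_left_eq_Ioc _ _).symm
  have hsum1 : ∑ j ∈ Finset.Icc (k + 1) (n + 1),
        ((n + 1).choose j : ℝ) * p ^ (j + 1) * (1 - p) ^ (n + 1 - j)
      = ((n + 1).choose (k + 1) : ℝ) * p ^ (k + 2) * (1 - p) ^ (n - k)
        + p * ∑ j ∈ Finset.Icc (k + 2) (n + 1),
            ((n + 1).choose j : ℝ) * p ^ j * (1 - p) ^ (n + 1 - j) := by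
    rw [hsplit, Finset.sum_cons, hIoc,
      show n + 1 - (k + 1) = n - k from by omega]
    have hfac : ∑ j ∈ Finset.Icc (k + 2) (n + 1),
          ((n + 1).choose j : ℝ) * p ^ (j + 1) * (1 - p) ^ (n + 1 - j)
        = p * ∑ j ∈ Finset.Icc (k + 2) (n + 1),
            ((n + 1).choose j : ℝ) * p ^ j * (1 - p) ^ (n + 1 - j) := by
      rw [Finset.mul_sum]
      exact Finset.sum_congr rfl fun j hj => by ring
    rw [hfac]
  -- second sum: shift index up
  have hsum2 : ∑ j ∈ Finset.Icc (k + 1) (n + 1),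
        ((n + 1).choose (j + 1) : ℝ) * p ^ (j + 1) * (1 - p) ^ (n + 1 - j)
      = (1 - p) * ∑ j ∈ Finset.Icc (k + 2) (n + 1),
          ((n + 1).choose j : ℝ) * p ^ j * (1 - p) ^ (n + 1 - j) := by
    have hmap2 : Finset.Icc (k + 2) (n + 2)
        = (Finset.Icc (k + 1) (n + 1)).map (addRightEmbedding 1) := by
      rw [Finset.map_add_right_Icc]
    have hshift : ∑ j ∈ Finset.Icc (k + 2) (n + 2),
          ((n + 1).choose j : ℝ) * p ^ j * (1 - p) ^ (n + 2 - j)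
        = ∑ j ∈ Finset.Icc (k + 1) (n + 1),
            ((n + 1).choose (j + 1) : ℝ) * p ^ (j + 1) * (1 - p) ^ (n + 1 - j) := by
      rw [hmap2, Finset.sum_map]
      simp only [addRightEmbedding_apply]
      refine Finset.sum_congr rfl fun j hj => ?_
      rw [show n + 2 - (j + 1) = n + 1 - j from by omega]
    rw [← hshift, show n + 2 = (n + 1) + 1 from rfl,
      Finset.sum_Icc_succ_top (by omega : k + 2 ≤ n + 1 + 1),
      Nat.choose_eq_zero_of_lt (by omega : n + 1 < n + 1 + 1), Finset.mul_sum]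
    simp only [Nat.cast_zero, zero_mul, add_zero]
    refine Finset.sum_congr rfl fun j hj => ?_
    rw [Finset.mem_Icc] at hj
    rw [show n + 1 + 1 - j = (n + 1 - j) + 1 from by omega, pow_succ]
    ring
  rw [hsum1, hsum2]
  ring

lemma stmt5_LR (p : ℝ) (k n : ℕ) : stmt5L p k n = stmt5R p k n := by
  induction n with
  | zero =>
      unfold stmt5L stmt5R
      rw [Finset.Icc_eq_empty (by omega), Finset.Icc_eq_empty (by omega)]
      simp
  | succ n ih => rw [stmt5L_succ, stmt5R_succ, ih]

theorem stmt_5 (p : ℝ) (hp : 0 < p) (hp1 : p < 1) (n i : ℕ) (hi : 1 ≤ i) :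
    ∑ d ∈ Finset.Icc 1 n, p ^ (i + 1) * (1 - p) ^ (d - 1) *
        ∑ j ∈ Finset.Icc (i - 1) (n - d), (j.choose (i - 1) : ℝ) * (1 - p) ^ (j - (i - 1))
      = 1 - ∑ k ∈ Finset.range (i + 1),
          ((n + 1).choose k : ℝ) * p ^ k * (1 - p) ^ (n + 1 - k) := by
  obtain ⟨k, rfl⟩ : ∃ k, i = k + 1 := ⟨i - 1, by omega⟩
  simp only [Nat.add_sub_cancel]
  have hL : ∑ d ∈ Finset.Icc 1 n, p ^ (k + 1 + 1) * (1 - p) ^ (d - 1) *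
        ∑ j ∈ Finset.Icc k (n - d), (j.choose k : ℝ) * (1 - p) ^ (j - k) = stmt5L p k n := rfl
  rw [hL, stmt5_LR]
  -- now show stmt5R p k n = 1 - partial binomial sum
  have hbin : ∑ j ∈ Finset.range (n + 2),
      ((n + 1).choose j : ℝ) * p ^ j * (1 - p) ^ (n + 1 - j) = 1 := by
    have h := add_pow p (1 - p) (n + 1)
    rw [show p + (1 - p) = (1 : ℝ) from by ring, one_pow] at h
    calc ∑ j ∈ Finset.range (n + 2),
          ((n + 1).choose j : ℝ) * p ^ j * (1 - p) ^ (n + 1 - j)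
        = ∑ j ∈ Finset.range (n + 1 + 1),
            p ^ j * (1 - p) ^ (n + 1 - j) * ((n + 1).choose j : ℝ) :=
          Finset.sum_congr rfl fun j hj => by ring
      _ = 1 := h.symm
  by_cases hkn : k ≤ n
  · have hsplit : ∑ j ∈ Finset.range (k + 1 + 1),
          ((n + 1).choose j : ℝ) * p ^ j * (1 - p) ^ (n + 1 - j)
        + ∑ j ∈ Finset.Ico (k + 2) (n + 2),
          ((n + 1).choose j : ℝ) * p ^ j * (1 - p) ^ (n + 1 - j)
        = ∑ j ∈ Finset.range (n + 2),
          ((n + 1).choose j : ℝ) * p ^ j * (1 - p) ^ (n + 1 - j) := by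
      simp only [Finset.range_eq_Ico]
      exact Finset.sum_Ico_consecutive _ (by omega) (by omega)
    have hIco : Finset.Ico (k + 2) (n + 2) = Finset.Icc (k + 2) (n + 1) :=
      Finset.Ico_add_one_right_eq_Icc _ _
    rw [hbin, hIco] at hsplit
    unfold stmt5R
    linarith [hsplit]
  · unfold stmt5R
    rw [Finset.Icc_eq_empty (by omega)]
    have hsub : ∑ j ∈ Finset.range (k + 1 + 1),
          ((n + 1).choose j : ℝ) * p ^ j * (1 - p) ^ (n + 1 - j)
        = ∑ j ∈ Finset.range (n + 2),
          ((n + 1).choose j : ℝ) * p ^ j * (1 - p) ^ (n + 1 - j) := by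
      symm
      refine Finset.sum_subset ?_ ?_
      · intro x hx; rw [Finset.mem_range] at *; omega
      · intro x hx hx2
        rw [Finset.mem_range] at hx2
        rw [Nat.choose_eq_zero_of_lt (by omega)]
        simp
    rw [hsub, hbin]
    simp
end

section
/- For 0 < p < 1, i ≥ 1, and fixed d ≥ 1, the limit as n → ∞ of F_n(d) := [sum over h from 1 to d of p^(i+1)*(1-p)^(h-1) * (sum over j from i-1 to n-h of (j choose (i-1))*(1-p)^(j-i+1))] / [1 - sum over k from 0 to i of ((n+1) choose k)*p^k*(1-p)^(n+1-k)] equals 1 - (1-p)^d. -/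
open Filter
open scoped BigOperators

lemma sum_shift (r : ℕ) (q : ℝ) (m : ℕ) :
    ∑ j ∈ Finset.Icc r m, (j.choose r : ℝ) * q ^ (j - r)
      = ∑ t ∈ Finset.range (m + 1 - r), ((t + r).choose r : ℝ) * q ^ t := by
  apply Finset.sum_nbij' (fun j => j - r) (fun t => t + r)
  · intro a ha; simp only [Finset.mem_Icc] at ha; simp only [Finset.mem_range]; omega
  · intro a ha; simp only [Finset.mem_range] at ha; simp only [Finset.mem_Icc]; omega
  · intro a ha; simp only [Finset.mem_Icc] at ha; omega
  · intro a ha; omega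
  · intro a ha; simp only [Finset.mem_Icc] at ha
    rw [Nat.sub_add_cancel ha.1]

theorem stmt_7 (p : ℝ) (hp : 0 < p) (hp1 : p < 1) (i : ℕ) (hi : 1 ≤ i) (d : ℕ) (hd : 1 ≤ d) :
    Tendsto (fun n : ℕ =>
      (∑ h ∈ Finset.Icc 1 d, p ^ (i + 1) * (1 - p) ^ (h - 1) *
        ∑ j ∈ Finset.Icc (i - 1) (n - h), (j.choose (i - 1) : ℝ) * (1 - p) ^ (j - (i - 1))) /
      (1 - ∑ k ∈ Finset.range (i + 1),
        ((n + 1).choose k : ℝ) * p ^ k * (1 - p) ^ (n + 1 - k)))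
      atTop (nhds (1 - (1 - p) ^ d)) := by
  set q : ℝ := 1 - p with hq
  have hq0 : 0 < q := by simp [hq]; linarith
  have hq1 : q < 1 := by simp [hq]; linarith
  have hqnorm : ‖q‖ < 1 := by rw [Real.norm_eq_abs, abs_of_pos hq0]; exact hq1
  have h1q : 1 - q = p := by simp [hq]
  -- inner sum limit
  have hinner : ∀ h : ℕ, 1 ≤ h → Tendsto
      (fun n : ℕ => ∑ j ∈ Finset.Icc (i - 1) (n - h), (j.choose (i - 1) : ℝ) * q ^ (j - (i - 1)))
      atTop (nhds (1 / p ^ i)) := by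
    intro h hh
    have hs : HasSum (fun t : ℕ => ((t + (i - 1)).choose (i - 1) : ℝ) * q ^ t)
        (1 / (1 - q) ^ ((i - 1) + 1)) := hasSum_choose_mul_geometric_of_norm_lt_one (i - 1) hqnorm
    have hs' := hs.tendsto_sum_nat
    rw [h1q, Nat.sub_add_cancel hi] at hs'
    have hcomp : Tendsto (fun n : ℕ => n - h + 1 - (i - 1)) atTop atTop := by
      apply tendsto_atTop_atTop.2
      intro b
      exact ⟨b + h + i, fun a ha => by omega⟩
    have := hs'.comp hcomp
    refine this.congr fun n => ?_
    simp only [Function.comp]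
    rw [sum_shift]
  -- numerator
  have hnum : Tendsto (fun n : ℕ =>
      ∑ h ∈ Finset.Icc 1 d, p ^ (i + 1) * q ^ (h - 1) *
        ∑ j ∈ Finset.Icc (i - 1) (n - h), (j.choose (i - 1) : ℝ) * q ^ (j - (i - 1)))
      atTop (nhds (1 - q ^ d)) := by
    have key : Tendsto (fun n : ℕ =>
        ∑ h ∈ Finset.Icc 1 d, p ^ (i + 1) * q ^ (h - 1) *
          ∑ j ∈ Finset.Icc (i - 1) (n - h), (j.choose (i - 1) : ℝ) * q ^ (j - (i - 1)))
        atTop (nhds (∑ h ∈ Finset.Icc 1 d, p ^ (i + 1) * q ^ (h - 1) * (1 / p ^ i))) := by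
      apply tendsto_finset_sum
      intro h hh
      simp only [Finset.mem_Icc] at hh
      exact (hinner h hh.1).const_mul _
    convert key using 2
    have hpne : (p : ℝ) ^ i ≠ 0 := pow_ne_zero _ hp.ne'
    have : ∀ h ∈ Finset.Icc 1 d, p ^ (i + 1) * q ^ (h - 1) * (1 / p ^ i) = p * q ^ (h - 1) := by
      intro h hh
      rw [pow_succ]
      field_simp
    rw [Finset.sum_congr rfl this]
    have : ∑ h ∈ Finset.Icc 1 d, p * q ^ (h - 1) = p * ∑ t ∈ Finset.range d, q ^ t := by
      rw [Finset.mul_sum]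
      apply Finset.sum_nbij' (fun h => h - 1) (fun t => t + 1)
      · intro a ha; simp only [Finset.mem_Icc] at ha; simp only [Finset.mem_range]; omega
      · intro a ha; simp only [Finset.mem_range] at ha; simp only [Finset.mem_Icc]; omega
      · intro a ha; simp only [Finset.mem_Icc] at ha; omega
      · intro a ha; omega
      · intro a ha; rfl
    rw [this, geom_sum_eq hq1.ne]
    have hq1' : q - 1 = -p := by simp [hq]
    rw [hq1']
    rw [div_neg, mul_neg, mul_div_assoc', mul_comm, mul_div_assoc, div_self hp.ne']
    ring
  -- denominator
  have hden : Tendsto (fun n : ℕ =>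
      (1 : ℝ) - ∑ k ∈ Finset.range (i + 1), ((n + 1).choose k : ℝ) * p ^ k * q ^ (n + 1 - k))
      atTop (nhds 1) := by
    have hz : Tendsto (fun n : ℕ =>
        ∑ k ∈ Finset.range (i + 1), ((n + 1).choose k : ℝ) * p ^ k * q ^ (n + 1 - k))
        atTop (nhds 0) := by
      have : (0 : ℝ) = ∑ k ∈ Finset.range (i + 1), (0 : ℝ) := by simp
      rw [this]
      apply tendsto_finset_sum
      intro k hk
      have hsum : Summable (fun m : ℕ => ((m + k).choose k : ℝ) * q ^ m) :=
        summable_choose_mul_geometric_of_norm_lt_one k hqnorm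
      have h0 : Tendsto (fun m : ℕ => ((m + k).choose k : ℝ) * q ^ m) atTop (nhds 0) :=
        hsum.tendsto_atTop_zero
      have hcomp : Tendsto (fun n : ℕ => n + 1 - k) atTop atTop := by
        apply tendsto_atTop_atTop.2
        intro b; exact ⟨b + k, fun a ha => by omega⟩
      have := (h0.comp hcomp).const_mul (p ^ k)
      rw [mul_zero] at this
      refine this.congr' ?_
      filter_upwards [eventually_atTop.2 ⟨k, fun n hn => hn⟩] with n hn
      simp only [Function.comp]
      rw [show n + 1 - k + k = n + 1 by omega]
      ring
    have := hz.const_sub 1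
    simpa using this
  have := hnum.div hden one_ne_zero
  rw [div_one] at this
  exact this
end
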